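/- Let y > 0 and t > 0 and c > 0. Then ∫₀^y (y − v)^{−1/2} e^{−c t v²} dv ≤ C t^{−1/4} for a constant C depending only on c. -/
import Mathlib

set_option maxHeartbeats 1000000

open MeasureTheory intervalIntegral Real Set

lemma aux14_int (y a b : ℝ) :
    IntervalIntegrable (fun v => (y - v) ^ (-(1/2) : ℝ)) volume a b := by
  have h := (intervalIntegrable_rpow' (a := y - a) (b := y - b)
    (by norm_num : (-1:ℝ) < -(1/2))).comp_sub_left y
  simpa using h

lemma aux14_eval (y a : ℝ) :
    ∫ v in a..y, (y - v) ^ (-(1/2) : ℝ) = 2 * (y - a) ^ ((1/2) : ℝ) := by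
  rw [intervalIntegral.integral_comp_sub_left (fun u => u ^ (-(1/2):ℝ)) y]
  rw [sub_self, integral_rpow (Or.inl (by norm_num))]
  norm_num
  ring

/-- ∫₀^y (y − v)^{−1/2} e^{−ctv²} dv ≤ C t^{−1/4}, C depending only on c. -/
theorem stmt14 (c : ℝ) (hc : 0 < c) :
    ∃ C : ℝ, 0 < C ∧ ∀ y t : ℝ, 0 < y → 0 < t →
      (∫ v in (0:ℝ)..y, (y - v) ^ (-(1/2) : ℝ) * Real.exp (-c * t * v^2))
        ≤ C * t ^ (-(1/4) : ℝ) := by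
  refine ⟨2 + 8/c + Real.sqrt (π/c), by positivity, fun y t hy ht => ?_⟩
  have htpos : (0:ℝ) < t ^ (-(1/4) : ℝ) := Real.rpow_pos_of_pos ht _
  have hct : 0 < c * t := mul_pos hc ht
  have hcont : Continuous (fun v : ℝ => Real.exp (-c * t * v^2)) := by fun_prop
  -- integrability of the full integrand on any interval
  have hf_int : ∀ a b : ℝ, IntervalIntegrable
      (fun v => (y - v) ^ (-(1/2) : ℝ) * Real.exp (-c * t * v^2)) volume a b := by
    intro a b
    exact (aux14_int y a b).mul_continuousOn hcont.continuousOn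
  rcases le_or_gt y (t ^ (-(1/2):ℝ)) with hcase | hcase
  · -- small y : bound exp by 1
    have h1 : (∫ v in (0:ℝ)..y, (y - v) ^ (-(1/2) : ℝ) * Real.exp (-c * t * v^2))
        ≤ ∫ v in (0:ℝ)..y, (y - v) ^ (-(1/2) : ℝ) := by
      refine integral_mono_on hy.le (hf_int 0 y) (aux14_int y 0 y) (fun x hx => ?_)
      have h2 : Real.exp (-c * t * x^2) ≤ 1 := by
        rw [Real.exp_le_one_iff]; nlinarith [sq_nonneg x]
      calc (y - x) ^ (-(1/2) : ℝ) * Real.exp (-c * t * x^2)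
          ≤ (y - x) ^ (-(1/2) : ℝ) * 1 :=
            mul_le_mul_of_nonneg_left h2 (Real.rpow_nonneg (by linarith [hx.2]) _)
        _ = (y - x) ^ (-(1/2) : ℝ) := mul_one _
    have h3 : y ^ ((1/2):ℝ) ≤ t ^ (-(1/4):ℝ) := by
      have := Real.rpow_le_rpow hy.le hcase (by norm_num : (0:ℝ) ≤ 1/2)
      rwa [← Real.rpow_mul ht.le, show (-(1/2) * (1/2) : ℝ) = -(1/4) by norm_num] at this
    have h4 : 0 ≤ 8/c + Real.sqrt (π/c) := by positivity
    calc (∫ v in (0:ℝ)..y, (y - v) ^ (-(1/2) : ℝ) * Real.exp (-c * t * v^2))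
        ≤ ∫ v in (0:ℝ)..y, (y - v) ^ (-(1/2) : ℝ) := h1
      _ = 2 * y ^ ((1/2):ℝ) := by rw [aux14_eval, sub_zero]
      _ ≤ 2 * t ^ (-(1/4):ℝ) := by linarith
      _ ≤ (2 + 8/c + Real.sqrt (π/c)) * t ^ (-(1/4):ℝ) := by nlinarith
  · -- large y : split at y/2
    have hts : 0 < t ^ (-(1/2):ℝ) := Real.rpow_pos_of_pos ht _
    have hsplit : (∫ v in (0:ℝ)..y, (y - v) ^ (-(1/2) : ℝ) * Real.exp (-c * t * v^2))
        = (∫ v in (0:ℝ)..(y/2), (y - v) ^ (-(1/2) : ℝ) * Real.exp (-c * t * v^2))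
          + ∫ v in (y/2)..y, (y - v) ^ (-(1/2) : ℝ) * Real.exp (-c * t * v^2) :=
      (integral_add_adjacent_intervals (hf_int 0 (y/2)) (hf_int (y/2) y)).symm
    have hy2 : (0:ℝ) < y/2 := by linarith
    -- Part A
    have hA : (∫ v in (0:ℝ)..(y/2), (y - v) ^ (-(1/2) : ℝ) * Real.exp (-c * t * v^2))
        ≤ Real.sqrt (π/c) * t ^ (-(1/4):ℝ) := by
      have hstep : (∫ v in (0:ℝ)..(y/2), (y - v) ^ (-(1/2) : ℝ) * Real.exp (-c * t * v^2))
          ≤ ∫ v in (0:ℝ)..(y/2), (y/2) ^ (-(1/2) : ℝ) * Real.exp (-c * t * v^2) := by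
        refine integral_mono_on (by linarith) (hf_int 0 (y/2))
          ((continuous_const.mul hcont).intervalIntegrable _ _) (fun x hx => ?_)
        have : (y - x) ^ (-(1/2) : ℝ) ≤ (y/2) ^ (-(1/2) : ℝ) :=
          Real.rpow_le_rpow_of_nonpos hy2 (by linarith [hx.2]) (by norm_num)
        exact mul_le_mul_of_nonneg_right this (Real.exp_nonneg _)
      have hgauss : (∫ v in (0:ℝ)..(y/2), Real.exp (-c * t * v^2))
          ≤ Real.sqrt (π/(c*t)) / 2 := by
        have h0 : ∀ v : ℝ, -c * t * v^2 = -(c*t) * v^2 := fun v => by ring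
        simp only [h0]
        rw [intervalIntegral.integral_of_le hy2.le, ← integral_gaussian_Ioi (c*t)]
        exact setIntegral_mono_set ((integrable_exp_neg_mul_sq hct).integrableOn)
          (Filter.Eventually.of_forall fun x => Real.exp_nonneg _)
          (HasSubset.Subset.eventuallyLE Ioc_subset_Ioi_self)
      have key : (∫ v in (0:ℝ)..(y/2), (y/2) ^ (-(1/2) : ℝ) * Real.exp (-c * t * v^2))
          = (y/2) ^ (-(1/2) : ℝ) * ∫ v in (0:ℝ)..(y/2), Real.exp (-c * t * v^2) :=
        intervalIntegral.integral_const_mul _ _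
      have hybd : (y/2) ^ (-(1/2) : ℝ) ≤ Real.sqrt 2 * t ^ ((1/4):ℝ) := by
        have h1 : (y/2) ^ (-(1/2) : ℝ) = 2 ^ ((1/2):ℝ) * y ^ (-(1/2):ℝ) := by
          rw [div_eq_mul_inv, Real.mul_rpow hy.le (by norm_num),
            Real.inv_rpow (by norm_num : (0:ℝ) ≤ 2),
            ← Real.rpow_neg (by norm_num : (0:ℝ) ≤ 2), neg_neg, mul_comm]
        have h2 : y ^ (-(1/2):ℝ) ≤ (t ^ (-(1/2):ℝ)) ^ (-(1/2):ℝ) :=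
          Real.rpow_le_rpow_of_nonpos hts hcase.le (by norm_num)
        rw [← Real.rpow_mul ht.le, show (-(1/2) * -(1/2) : ℝ) = (1/4:ℝ) by norm_num] at h2
        rw [h1, Real.sqrt_eq_rpow]
        exact mul_le_mul_of_nonneg_left h2 (Real.rpow_nonneg (by norm_num) _)
      have hsqrt : Real.sqrt (π/(c*t)) = Real.sqrt (π/c) * t ^ (-(1/2):ℝ) := by
        rw [show π/(c*t) = (π/c) * t⁻¹ by field_simp, Real.sqrt_mul (by positivity),
          Real.sqrt_eq_rpow t⁻¹, ← Real.rpow_neg_one t, ← Real.rpow_mul ht.le]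
        norm_num
      have hexp_nonneg : (0:ℝ) ≤ ∫ v in (0:ℝ)..(y/2), Real.exp (-c * t * v^2) := by
        rw [intervalIntegral.integral_of_le hy2.le]
        exact setIntegral_nonneg measurableSet_Ioc (fun x _ => Real.exp_nonneg _)
      calc (∫ v in (0:ℝ)..(y/2), (y - v) ^ (-(1/2) : ℝ) * Real.exp (-c * t * v^2))
          ≤ (y/2) ^ (-(1/2) : ℝ) * ∫ v in (0:ℝ)..(y/2), Real.exp (-c * t * v^2) := by
            rw [← key]; exact hstep
        _ ≤ (Real.sqrt 2 * t ^ ((1/4):ℝ)) * (Real.sqrt (π/(c*t)) / 2) := by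
            apply mul_le_mul hybd hgauss hexp_nonneg (by positivity)
        _ = (Real.sqrt 2 / 2) * Real.sqrt (π/c) * (t ^ ((1/4):ℝ) * t ^ (-(1/2):ℝ)) := by
            rw [hsqrt]; ring
        _ = (Real.sqrt 2 / 2) * Real.sqrt (π/c) * t ^ (-(1/4):ℝ) := by
            rw [← Real.rpow_add ht]; norm_num
        _ ≤ Real.sqrt (π/c) * t ^ (-(1/4):ℝ) := by
            have h2 : Real.sqrt 2 / 2 ≤ 1 := by
              rw [div_le_one (by norm_num)]
              have h4 : Real.sqrt 4 = 2 := by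
                rw [show (4:ℝ) = 2^2 by norm_num, Real.sqrt_sq (by norm_num)]
              have := Real.sqrt_le_sqrt (by norm_num : (2:ℝ) ≤ 4)
              linarith
            nlinarith [Real.sqrt_nonneg (π/c), htpos.le,
              mul_nonneg (Real.sqrt_nonneg (π/c)) htpos.le]
    -- Part B
    have hB : (∫ v in (y/2)..y, (y - v) ^ (-(1/2) : ℝ) * Real.exp (-c * t * v^2))
        ≤ 8/c * t ^ (-(1/4):ℝ) := by
      have hstep : (∫ v in (y/2)..y, (y - v) ^ (-(1/2) : ℝ) * Real.exp (-c * t * v^2))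
          ≤ ∫ v in (y/2)..y, (y - v) ^ (-(1/2) : ℝ) * Real.exp (-c * t * (y/2)^2) := by
        refine integral_mono_on (by linarith) (hf_int (y/2) y)
          ((aux14_int y (y/2) y).mul_continuousOn continuousOn_const) (fun x hx => ?_)
        have hsq : (y/2)^2 ≤ x^2 := by nlinarith [hx.1, hy2]
        have hxx : Real.exp (-c * t * x^2) ≤ Real.exp (-c * t * (y/2)^2) := by
          apply Real.exp_le_exp.2
          nlinarith [mul_le_mul_of_nonneg_left hsq hct.le]
        exact mul_le_mul_of_nonneg_left hxx (Real.rpow_nonneg (by linarith [hx.2]) _)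
      have hval : (∫ v in (y/2)..y, (y - v) ^ (-(1/2) : ℝ) * Real.exp (-c * t * (y/2)^2))
          = Real.exp (-c * t * (y/2)^2) * (2 * (y - y/2) ^ ((1/2):ℝ)) := by
        rw [intervalIntegral.integral_mul_const, aux14_eval]; ring
      have hexpbd : Real.exp (-c * t * (y/2)^2) ≤ (c * t * (y/2)^2)⁻¹ := by
        have hx : 0 < c * t * (y/2)^2 := by positivity
        rw [show -c * t * (y/2)^2 = -(c * t * (y/2)^2) by ring, Real.exp_neg]
        apply inv_anti₀ hx
        linarith [Real.add_one_le_exp (c * t * (y/2)^2)]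
      have hy12 : (y - y/2) ^ ((1/2):ℝ) ≤ y ^ ((1/2):ℝ) :=
        Real.rpow_le_rpow (by linarith) (by linarith) (by norm_num)
      have e2 : y ^ ((-2):ℝ) = ((y^2 : ℝ))⁻¹ := by
        rw [Real.rpow_neg hy.le, show ((2:ℝ)) = ((2:ℕ):ℝ) by norm_num, Real.rpow_natCast]
      have hrpow : y ^ ((1/2):ℝ) * ((y/2)^2)⁻¹ = 4 * y ^ (-(3/2):ℝ) := by
        have hy0 : y ≠ 0 := hy.ne'
        have h4 : (((y/2)^2 : ℝ))⁻¹ = 4 * ((y^2 : ℝ))⁻¹ := by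
          field_simp; ring
        rw [h4, ← e2, show y ^ ((1/2):ℝ) * (4 * y ^ ((-2):ℝ))
            = 4 * (y ^ ((1/2):ℝ) * y ^ ((-2):ℝ)) by ring, ← Real.rpow_add hy]
        norm_num
      have hybd : y ^ (-(3/2):ℝ) ≤ t ^ ((3/4):ℝ) := by
        have h2 : y ^ (-(3/2):ℝ) ≤ (t ^ (-(1/2):ℝ)) ^ (-(3/2):ℝ) :=
          Real.rpow_le_rpow_of_nonpos hts hcase.le (by norm_num)
        rwa [← Real.rpow_mul ht.le, show (-(1/2) * -(3/2) : ℝ) = (3/4:ℝ) by norm_num] at h2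
      have hfinal : (8:ℝ)/c * t⁻¹ * t ^ ((3/4):ℝ) = 8/c * t ^ (-(1/4):ℝ) := by
        rw [← Real.rpow_neg_one t, mul_assoc, ← Real.rpow_add ht]
        norm_num
      calc (∫ v in (y/2)..y, (y - v) ^ (-(1/2) : ℝ) * Real.exp (-c * t * v^2))
          ≤ Real.exp (-c * t * (y/2)^2) * (2 * (y - y/2) ^ ((1/2):ℝ)) := by
            rw [← hval]; exact hstep
        _ ≤ (c * t * (y/2)^2)⁻¹ * (2 * y ^ ((1/2):ℝ)) := by
            have h0 : (0:ℝ) ≤ (y - y/2) ^ ((1/2):ℝ) :=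
              Real.rpow_nonneg (by linarith) _
            apply mul_le_mul hexpbd (by linarith) (by linarith) (by positivity)
        _ = 2 * (c*t)⁻¹ * (y ^ ((1/2):ℝ) * ((y/2)^2)⁻¹) := by
            rw [mul_inv]; ring
        _ = 2 * (c*t)⁻¹ * (4 * y ^ (-(3/2):ℝ)) := by rw [hrpow]
        _ ≤ 2 * (c*t)⁻¹ * (4 * t ^ ((3/4):ℝ)) := by
            have : (0:ℝ) ≤ 2 * (c*t)⁻¹ := by positivity
            nlinarith [this]
        _ = 8/c * t⁻¹ * t ^ ((3/4):ℝ) := by rw [mul_inv]; ring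
        _ = 8/c * t ^ (-(1/4):ℝ) := hfinal
    rw [hsplit]
    have hs : 0 ≤ Real.sqrt (π/c) := Real.sqrt_nonneg _
    nlinarith [htpos.le, mul_nonneg hs htpos.le]
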